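/- arXiv:2104.09716 — 2 statements merged into one kernel-verified Lean document; each statement's English description precedes it below -/
import Mathlib

section
/- For all fixed k, d > 0, every control function g (monotone with g(x) ≥ x) and every n ∈ ℕ, there is a finite maximum length of (g,n)-controlled bad sequences over ((P_f(ℕ^k))^d, ≼_min^d, ‖·‖): there exists N such that every sequence (a_0, …, a_{N}) in (P_f(ℕ^k))^d with ‖a_i‖ ≤ g^i(n) for all i contains indices i < j with a_i ≼_min^d a_j. -/
/-- The minoring ordering on finite subsets of ℕ^k. -/
def MinLe {k : ℕ} (X Y : Finset (Fin k → ℕ)) : Prop :=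
  ∀ y ∈ Y, ∃ x ∈ X, x ≤ y

/-- The norm of a tuple `x ∈ ℕ^k` is its maximum coordinate. -/
def vecNorm {k : ℕ} (x : Fin k → ℕ) : ℕ := Finset.univ.sup x

/-- The norm of a finite set `X ⊆ ℕ^k` is the maximum of its cardinality and
of the norms of its elements. -/
def setNorm {k : ℕ} (X : Finset (Fin k → ℕ)) : ℕ :=
  max X.card (X.sup vecNorm)

/-- The norm of a d-tuple of finite sets is the maximum of the norms of its entries. -/
def tupNorm {k d : ℕ} (X : Fin d → Finset (Fin k → ℕ)) : ℕ :=
  Finset.univ.sup fun l => setNorm (X l)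

section AF

variable {k : ℕ}

/-- The "boxes" describing the complement of the upward closure of `X`:
for each choice function `c` picking a coordinate for each element of `X`,
the box `fun i => inf of (x i) over x with c x = i` (in `ℕ∞`). A point `y`
is outside the upward closure iff `y + 1 ≤ b` coordinatewise for some box `b`. -/
noncomputable def boxes (X : Finset (Fin k → ℕ)) : Finset (Fin k → ℕ∞) :=
  (Finset.univ : Finset (↥X → Fin k)).image
    (fun c i => (X.attach.filter fun x => c x = i).inf fun x => ((x.1 i : ℕ∞)))

lemma mem_boxes_iff {X : Finset (Fin k → ℕ)} (y : Fin k → ℕ) :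
    (∀ x ∈ X, ∃ i, y i < x i) ↔ ∃ b ∈ boxes X, ∀ i, (y i : ℕ∞) + 1 ≤ b i := by
  constructor
  · intro h
    classical
    refine ⟨_, Finset.mem_image.2 ⟨fun x => Classical.choose (h x.1 x.2),
      Finset.mem_univ _, rfl⟩, ?_⟩
    intro i
    refine Finset.le_inf fun x hx => ?_
    have hxi := Classical.choose_spec (h x.1 x.2)
    have hci : Classical.choose (h x.1 x.2) = i := (Finset.mem_filter.1 hx).2
    rw [hci] at hxi
    exact_mod_cast Nat.succ_le_of_lt hxi
  · rintro ⟨b, hb, hy⟩ x hx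
    obtain ⟨c, -, rfl⟩ := Finset.mem_image.1 hb
    refine ⟨c ⟨x, hx⟩, ?_⟩
    have hmem : (⟨x, hx⟩ : ↥X) ∈ X.attach.filter fun z => c z = c ⟨x, hx⟩ := by
      simp [Finset.mem_filter]
    have := le_trans (hy (c ⟨x, hx⟩)) (Finset.inf_le hmem)
    exact_mod_cast Nat.lt_of_succ_le (by exact_mod_cast this)

lemma forall₂_exists {α β : Type*} {r : α → β → Prop} {l₁ : List α} {l₂ : List β}
    (h : List.Forall₂ r l₁ l₂) : ∀ b ∈ l₁, ∃ b' ∈ l₂, r b b' := by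
  induction h with
  | nil => intro b hb; simp at hb
  | cons h _ ih =>
    intro b hb
    rcases List.mem_cons.1 hb with rfl | hmem
    · exact ⟨_, List.mem_cons_self, h⟩
    · obtain ⟨b', hb', hr⟩ := ih b hmem
      exact ⟨b', List.mem_cons_of_mem _ hb', hr⟩

lemma minLe_of_boxes {X Y : Finset (Fin k → ℕ)}
    (h : ∀ b ∈ boxes X, ∃ b' ∈ boxes Y, b ≤ b') : MinLe X Y := by
  intro y hy
  by_contra hc
  push_neg at hc
  have hout : ∀ x ∈ X, ∃ i, y i < x i := by
    intro x hx
    have := hc x hx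
    rcases not_forall.1 (fun hh => this (fun i => hh i)) with ⟨i, hi⟩
    exact ⟨i, Nat.lt_of_not_le hi⟩
  obtain ⟨b, hb, hyb⟩ := (mem_boxes_iff y).1 hout
  obtain ⟨b', hb', hbb'⟩ := h b hb
  have hout' : ∀ x ∈ Y, ∃ i, y i < x i :=
    (mem_boxes_iff y).2 ⟨b', hb', fun i => le_trans (hyb i) (hbb' i)⟩
  obtain ⟨i, hi⟩ := hout' y hy
  exact lt_irrefl _ hi

lemma minLe_pwo :
    (Set.univ : Set (Finset (Fin k → ℕ))).PartiallyWellOrderedOn MinLe := by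
  rw [Set.partiallyWellOrderedOn_iff_exists_lt]
  intro f _
  -- apply Higman's lemma over `Fin k → ℕ∞`
  haveI : IsWellOrder ℕ∞ (· < ·) := ⟨⟩
  have hW : (Set.univ : Set (Fin k → ℕ∞)).IsPWO :=
    Set.isPWO_univ_iff.2 inferInstance
  have hH := Set.PartiallyWellOrderedOn.partiallyWellOrderedOn_sublistForall₂
    (· ≤ ·) hW
  obtain ⟨i, j, hij, hrel⟩ := hH.exists_lt (f := fun m => (boxes (f m)).toList)
    (by intro m; intro x hx; trivial)
  refine ⟨i, j, hij, minLe_of_boxes ?_⟩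
  intro b hb
  obtain ⟨l, hforall, hsub⟩ := List.sublistForall₂_iff.1 hrel
  have hbmem : b ∈ (boxes (f i)).toList := Finset.mem_toList.2 hb
  obtain ⟨b', hb', hle⟩ := forall₂_exists hforall b hbmem
  exact ⟨b', Finset.mem_toList.1 (hsub.subset hb'), hle⟩

instance : IsRefl (Finset (Fin k → ℕ)) MinLe :=
  ⟨fun X y hy => ⟨y, hy, le_refl y⟩⟩

instance : IsTrans (Finset (Fin k → ℕ)) MinLe :=
  ⟨fun X Y Z hXY hYZ z hz => by
    obtain ⟨y, hy, hyz⟩ := hYZ z hz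
    obtain ⟨x, hx, hxy⟩ := hXY y hy
    exact ⟨x, hx, le_trans hxy hyz⟩⟩

instance : IsPreorder (Finset (Fin k → ℕ)) MinLe := {}

/-- `MinLe^d` is almost full: every infinite sequence of `d`-tuples contains
an increasing pair. -/
lemma tuple_af {d : ℕ} (f : ℕ → (Fin d → Finset (Fin k → ℕ))) :
    ∃ i j : ℕ, i < j ∧ ∀ l : Fin d, MinLe (f i l) (f j l) := by
  classical
  have key : ∀ (s : Finset (Fin d)) (f : ℕ → (Fin d → Finset (Fin k → ℕ))),
      ∃ g : ℕ ↪o ℕ, ∀ m n : ℕ, m ≤ n → ∀ l ∈ s, MinLe (f (g m) l) (f (g n) l) := by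
    intro s
    induction s using Finset.induction_on with
    | empty => exact fun f => ⟨(RelEmbedding.refl (· ≤ ·) : ℕ ↪o ℕ), by simp⟩
    | @insert a s ha ih =>
      intro f
      obtain ⟨g, hg⟩ := ih f
      obtain ⟨g', hg'⟩ := minLe_pwo.exists_monotone_subseq
        (f := fun m => f (g m) a) (fun _ => Set.mem_univ _)
      refine ⟨g'.trans g, fun m n hmn l hl => ?_⟩
      rcases Finset.mem_insert.1 hl with rfl | hl
      · exact hg' m n hmn
      · exact hg (g' m) (g' n) (g'.monotone hmn) l hl
  obtain ⟨g, hg⟩ := key Finset.univ f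
  exact ⟨g 0, g 1, g.strictMono Nat.zero_lt_one,
    fun l => hg 0 1 (Nat.zero_le 1) l (Finset.mem_univ l)⟩

/-- Finiteness of controlled values. -/
lemma finite_norm_le {d : ℕ} (m : ℕ) :
    {v : Fin d → Finset (Fin k → ℕ) | tupNorm v ≤ m}.Finite := by
  classical
  have hvec : {x : Fin k → ℕ | ∀ i, x i ≤ m}.Finite := by
    have := Set.Finite.pi (fun i : Fin k => Set.finite_Iic m)
    exact this.subset (by intro x hx; simp [Set.mem_pi]; exact fun i => hx i)
  have hset : {X : Finset (Fin k → ℕ) | setNorm X ≤ m}.Finite := by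
    apply Set.Finite.subset (hvec.toFinset.powerset.finite_toSet)
    intro X hX
    have hsub2 : X ⊆ hvec.toFinset := by
      intro x hx
      simp only [Set.Finite.mem_toFinset, Set.mem_setOf_eq]
      intro i
      have h1 : vecNorm x ≤ X.sup vecNorm := Finset.le_sup hx
      have h2 : x i ≤ vecNorm x := Finset.le_sup (Finset.mem_univ i)
      exact le_trans h2 (le_trans h1 (le_trans (le_max_right _ _) hX))
    exact Finset.mem_coe.mpr (Finset.mem_powerset.mpr hsub2)
  have : {v : Fin d → Finset (Fin k → ℕ) | tupNorm v ≤ m} ⊆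
      Set.pi Set.univ (fun _ : Fin d => {X : Finset (Fin k → ℕ) | setNorm X ≤ m}) := by
    intro v hv
    intro l _
    exact le_trans (Finset.le_sup (f := fun l => setNorm (v l)) (Finset.mem_univ l)) hv
  exact (Set.Finite.pi (fun _ => hset)).subset this

end AF

/-- For fixed `k, d > 0`, any control function `g` and any `n`, there is a
finite maximum length for `(g,n)`-controlled bad sequences over
`((P_f(ℕ^k))^d, ≼_min^d, ‖·‖)`: there is `N` such that every controlled
sequence `a_0, …, a_N` contains `i < j` with `a_i ≼_min^d a_j`. -/
theorem controlled_bad_minoring_bounded (k d : ℕ) (hk : 0 < k) (hd : 0 < d)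
    (g : ℕ → ℕ) (hmono : Monotone g) (hge : ∀ x, x ≤ g x) (n : ℕ) :
    ∃ N : ℕ, ∀ a : Fin (N + 1) → (Fin d → Finset (Fin k → ℕ)),
      (∀ i : Fin (N + 1), tupNorm (a i) ≤ g^[(i : ℕ)] n) →
      ∃ i j : Fin (N + 1), (i : ℕ) < j ∧ ∀ l : Fin d, MinLe (a i l) (a j l) := by
  classical
  by_contra hcon
  push_neg at hcon
  choose a ha hbad using hcon
  -- a N : Fin (N+1) → tuples, controlled, with no good pair
  -- Build an infinite controlled bad sequence via an ultrafilter.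
  obtain ⟨U, hUcof⟩ := Ultrafilter.exists_le (Filter.cofinite : Filter ℕ)
  have hge_mem : ∀ i : ℕ, {N : ℕ | i ≤ N} ∈ U := by
    intro i
    apply hUcof
    simp only [Filter.mem_cofinite]
    exact (Set.finite_Iio i).subset (by intro N hN; simpa using Nat.lt_of_not_le hN)
  -- the value of the N-th witness sequence at position i (junk if i > N)
  set F : ℕ → ℕ → (Fin d → Finset (Fin k → ℕ)) :=
    fun N i => if h : i ≤ N then a N ⟨i, Nat.lt_succ_of_le h⟩ else fun _ => ∅ with hF
  have hFval : ∀ i : ℕ, ∃ v : Fin d → Finset (Fin k → ℕ),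
      tupNorm v ≤ g^[i] n ∧ {N : ℕ | F N i = v} ∈ U := by
    intro i
    have hfin : {v : Fin d → Finset (Fin k → ℕ) | tupNorm v ≤ g^[i] n}.Finite :=
      finite_norm_le _
    have hsub : {N : ℕ | i ≤ N} ⊆
        ⋃ v ∈ {v : Fin d → Finset (Fin k → ℕ) | tupNorm v ≤ g^[i] n},
          {N : ℕ | F N i = v} := by
      intro N hN
      simp only [Set.mem_iUnion, Set.mem_setOf_eq]
      refine ⟨F N i, ?_, rfl⟩
      have hFN : F N i = a N ⟨i, Nat.lt_succ_of_le hN⟩ := dif_pos hN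
      rw [hFN]
      exact ha N ⟨i, Nat.lt_succ_of_le hN⟩
    have hmem : (⋃ v ∈ {v : Fin d → Finset (Fin k → ℕ) | tupNorm v ≤ g^[i] n},
        {N : ℕ | F N i = v}) ∈ U := Filter.mem_of_superset (hge_mem i) hsub
    obtain ⟨v, hv, hvU⟩ := (Ultrafilter.finite_biUnion_mem_iff hfin).1 hmem
    exact ⟨v, hv, hvU⟩
  choose b hbctrl hbU using hFval
  -- b is an infinite bad sequence : contradiction with tuple_af
  obtain ⟨i, j, hij, hgood⟩ := tuple_af b
  have hmem : ({N : ℕ | F N i = b i} ∩ {N : ℕ | F N j = b j} ∩ {N : ℕ | j ≤ N}) ∈ U :=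
    Filter.inter_mem (Filter.inter_mem (hbU i) (hbU j)) (hge_mem j)
  obtain ⟨N, ⟨⟨hNi, hNj⟩, hjN⟩⟩ := Ultrafilter.nonempty_of_mem hmem
  have hiN : i ≤ N := le_trans (le_of_lt hij) hjN
  have hFi : F N i = a N ⟨i, Nat.lt_succ_of_le hiN⟩ := dif_pos hiN
  have hFj : F N j = a N ⟨j, Nat.lt_succ_of_le hjN⟩ := dif_pos hjN
  obtain ⟨l, hl⟩ := hbad N ⟨i, Nat.lt_succ_of_le hiN⟩ ⟨j, Nat.lt_succ_of_le hjN⟩ hij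
  apply hl
  have h1 : a N ⟨i, Nat.lt_succ_of_le hiN⟩ = b i := by rw [← hFi]; exact hNi
  have h2 : a N ⟨j, Nat.lt_succ_of_le hjN⟩ = b j := by rw [← hFj]; exact hNj
  rw [h1, h2]
  exact hgood l
end

section
/- Fix d > 0 and let formulas range over the finite set Fin d. The relation ⊴ on hypersequents over Fin d, defined by g ⊴ h iff for every component (Γ, π) of g there is a component (Γ', π) of h (with the same succedent π) such that Γ is a submultiset of Γ', is a well-quasi-ordering: for every infinite sequence (h_i) of hypersequents over Fin d there exist i < j with h_i ⊴ h_j. -/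
/-- A sequent over `Fin d`: an antecedent (finite multiset of formulas)
together with a succedent (a formula or empty). -/
abbrev Sequent (d : ℕ) := Multiset (Fin d) × Option (Fin d)

/-- A hypersequent over `Fin d`: a finite multiset of sequents. -/
abbrev Hypersequent (d : ℕ) := Multiset (Sequent d)

/-- The domination relation on sequents. -/
def SeqRel (d : ℕ) : Sequent d → Sequent d → Prop :=
  fun s s' => s.2 = s'.2 ∧ s.1 ≤ s'.1

instance (d : ℕ) : Std.Refl (SeqRel d) :=
  ⟨fun _ => ⟨rfl, le_rfl⟩⟩

instance (d : ℕ) : IsTrans (Sequent d) (SeqRel d) :=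
  ⟨fun _ _ _ h₁ h₂ => ⟨h₁.1.trans h₂.1, h₁.2.trans h₂.2⟩⟩

instance (d : ℕ) : IsPreorder (Sequent d) (SeqRel d) where

lemma multiset_pwo (d : ℕ) :
    (Set.univ : Set (Multiset (Fin d))).PartiallyWellOrderedOn (· ≤ ·) := by
  rw [Set.partiallyWellOrderedOn_iff_exists_lt]
  intro f _
  obtain ⟨m, n, hmn, hle⟩ :=
    (Pi.wellQuasiOrderedLE (ι := Fin d) (α := fun _ => ℕ)).wqo (fun n i => (f n).count i)
  exact ⟨m, n, hmn, Multiset.le_iff_count.2 fun a => hle a⟩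

lemma seq_pwo (d : ℕ) :
    (Set.univ : Set (Sequent d)).PartiallyWellOrderedOn (SeqRel d) := by
  have h2 : (Set.univ : Set (Option (Fin d))).PartiallyWellOrderedOn (· = ·) :=
    Set.finite_univ.partiallyWellOrderedOn
  have := Set.partiallyWellOrderedOn_iff_exists_lt.1 ((multiset_pwo d).prod h2)
  rw [Set.partiallyWellOrderedOn_iff_exists_lt]
  intro f hf
  obtain ⟨m, n, hmn, hle⟩ := this (fun n => (f n)) (by simp [Set.mem_prod])
  exact ⟨m, n, hmn, hle.2, hle.1⟩

lemma sublistForall₂_mem {α : Type*} {r : α → α → Prop} {l l' : List α}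
    (h : List.SublistForall₂ r l l') : ∀ x ∈ l, ∃ y ∈ l', r x y := by
  induction h with
  | nil => simp
  | cons hr _ ih =>
    intro x hx
    rcases List.mem_cons.1 hx with rfl | hx
    · exact ⟨_, List.mem_cons_self, hr⟩
    · obtain ⟨y, hy, hxy⟩ := ih _ hx
      exact ⟨y, List.mem_cons_of_mem _ hy, hxy⟩
  | cons_right _ ih =>
    intro x hx
    obtain ⟨y, hy, hxy⟩ := ih x hx
    exact ⟨y, List.mem_cons_of_mem _ hy, hxy⟩

/-- The relation `⊴` on hypersequents over `Fin d`, defined by `g ⊴ h` iff every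
component of `g` has a component of `h` with the same succedent and a larger
antecedent, is a well-quasi-ordering. -/
theorem hypersequent_maj_wqo (d : ℕ) (hd : 0 < d) (h : ℕ → Hypersequent d) :
    ∃ i j, i < j ∧
      ∀ s ∈ h i, ∃ s' ∈ h j, s.2 = s'.2 ∧ s.1 ≤ s'.1 := by
  have := Set.partiallyWellOrderedOn_iff_exists_lt.1 ((seq_pwo d).partiallyWellOrderedOn_sublistForall₂ (SeqRel d))
  obtain ⟨i, j, hij, hrel⟩ := this (fun n => (h n).toList) (by simp)
  refine ⟨i, j, hij, fun s hs => ?_⟩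
  obtain ⟨s', hs', hr⟩ := sublistForall₂_mem hrel s (by simpa using hs)
  exact ⟨s', by simpa using hs', hr.1, hr.2⟩
end
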